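/- arXiv:1306.6847 — 2 statements merged into one kernel-verified Lean document; each statement's English description precedes it below -/
import Mathlib

section
/- Let V be a type, let a, b ∈ V be distinct, and let C, D ⊆ V be sets such that {a}, {b}, C, D are pairwise disjoint. Let Γ be a simple graph on V such that every pair of adjacent vertices is, up to order, of one of the forms: (a, b); (a, d) with d ∈ D; (b, c) with c ∈ C; or (c, d) with c ∈ C and d ∈ D. Let θ be a real number with π/3 ≤ θ ≤ π/2, and let w : Sym2 V → ℝ be a weight function assigning the value 2θ to the edge {a, b} and to every edge {c, d} with c ∈ C, d ∈ D, and the value π − 2θ to every edge {a, d} with d ∈ D and every edge {b, c} with c ∈ C. Then for every cycle p of Γ, the sum of w over the edge list of p is at least 2π. -/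
/-!
Every edge of the link joins `{a} ∪ C` to `{b} ∪ D`, so a cycle has even length `n ≥ 4`.
The long edges `{a,b}`, `{c,d}` are exactly the edges joining `{a} ∪ D` to `{b} ∪ C`, so their
number `L` is even as well; and `L ≠ 0`, because the short edges `{a,d}`, `{b,c}` form two stars,
which contain no cycle. Hence the weight `(π - 2θ) n + (4θ - π) L` is at least
`4 (π - 2θ) + 2 (4θ - π) = 2π`.
-/

section

open Classical

variable {V : Type*}

noncomputable def Sym2.crosses (S : Set V) : Sym2 V → Bool :=
  Sym2.lift ⟨fun x y => xor (decide (x ∈ S)) (decide (y ∈ S)), fun _ _ => Bool.xor_comm _ _⟩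

@[simp]
lemma Sym2.crosses_mk (S : Set V) (x y : V) :
    Sym2.crosses S s(x, y) = xor (decide (x ∈ S)) (decide (y ∈ S)) :=
  rfl

end

lemma List.sum_map_eq_of_forall_ite {α R : Type*} [CommRing R] (l : List α) (P : α → Bool)
    (w : α → R) (x y : R) (h : ∀ e ∈ l, w e = if P e then x else y) :
    (l.map w).sum = y * l.length + (x - y) * l.countP P := by
  induction l with
  | nil => simp
  | cons e l ih =>
    rw [List.map_cons, List.sum_cons, ih fun e' he' => h e' (List.mem_cons_of_mem e he'),
      h e List.mem_cons_self, List.length_cons, List.countP_cons]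
    cases P e <;> push_cast <;> simp <;> ring

namespace SimpleGraph

variable {V : Type*} {G : SimpleGraph V}

lemma Walk.even_countP_crosses_iff (S : Set V) {x y : V} (q : G.Walk x y) :
    Even (q.edges.countP (Sym2.crosses S)) ↔ (x ∈ S ↔ y ∈ S) := by
  induction q with
  | nil => simp
  | @cons x z y _ q ih =>
    rw [Walk.edges_cons, List.countP_cons, Nat.even_add, ih]
    by_cases hx : x ∈ S <;> by_cases hz : z ∈ S <;> by_cases hy : y ∈ S <;> simp [hx, hz, hy]

lemma Walk.IsCycle.exists_mem_edges_ne {u v : V} {p : G.Walk v v} (hp : p.IsCycle)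
    (hu : u ∈ p.support) (x : V) : ∃ y ≠ x, s(u, y) ∈ p.edges := by
  obtain ⟨y₁, y₂, hne, hy⟩ :=
    Set.ncard_eq_two.mp (hp.ncard_neighborSet_toSubgraph_eq_two hu)
  have hedge : ∀ y ∈ p.toSubgraph.neighborSet u, s(u, y) ∈ p.edges :=
    fun _ hy => Walk.adj_toSubgraph_iff_mem_edges.mp hy
  by_cases h : y₁ = x
  · exact ⟨y₂, h ▸ hne.symm, hedge _ (by simp [hy])⟩
  · exact ⟨y₁, h, hedge _ (by simp [hy])⟩

/-- The spokes `s(u, g u)` form stars centred outside `U`, and a union of stars has no cycle. -/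
lemma Walk.IsCycle.exists_mem_edges_forall_ne_spoke {v : V} {p : G.Walk v v} (hp : p.IsCycle)
    {U : Set V} {g : V → V} (hg : ∀ u ∈ U, g u ∉ U) :
    ∃ e ∈ p.edges, ∀ u ∈ U, e ≠ s(u, g u) := by
  by_contra! hspoke
  obtain ⟨e, he⟩ := List.exists_mem_of_ne_nil _ (Walk.edges_eq_nil.not.mpr hp.not_nil)
  obtain ⟨u, hu, rfl⟩ := hspoke e he
  obtain ⟨y, hy, hyp⟩ := hp.exists_mem_edges_ne (p.fst_mem_support_of_mem_edges he) (g u)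
  obtain ⟨u', hu', heq⟩ := hspoke _ hyp
  rcases Sym2.eq_iff.mp heq with ⟨rfl, rfl⟩ | ⟨rfl, -⟩
  exacts [hy rfl, hg u' hu' hu]

end SimpleGraph

section LinkGraph

variable {V : Type*} {a b : V} {C D : Set V}

inductive IsLinkEdge (a b : V) (C D : Set V) : Sym2 V → Prop
  | ab : IsLinkEdge a b C D s(a, b)
  | ad {d : V} : d ∈ D → IsLinkEdge a b C D s(a, d)
  | bc {c : V} : c ∈ C → IsLinkEdge a b C D s(b, c)
  | cd {c d : V} : c ∈ C → d ∈ D → IsLinkEdge a b C D s(c, d)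

lemma isLinkEdge_of_mem_edgeSet {Γ : SimpleGraph V}
    (hadj : ∀ x y, Γ.Adj x y →
      (x = a ∧ y = b) ∨ (x = b ∧ y = a) ∨
      (x = a ∧ y ∈ D) ∨ (x ∈ D ∧ y = a) ∨
      (x = b ∧ y ∈ C) ∨ (x ∈ C ∧ y = b) ∨
      (x ∈ C ∧ y ∈ D) ∨ (x ∈ D ∧ y ∈ C))
    {e : Sym2 V} (he : e ∈ Γ.edgeSet) : IsLinkEdge a b C D e := by
  induction e using Sym2.ind with
  | h x y =>
    rcases hadj x y he with ⟨rfl, rfl⟩ | ⟨rfl, rfl⟩ | ⟨rfl, hy⟩ | ⟨hx, rfl⟩ |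
      ⟨rfl, hy⟩ | ⟨hx, rfl⟩ | ⟨hx, hy⟩ | ⟨hx, hy⟩ <;>
      first
      | constructor <;> assumption
      | rw [Sym2.eq_swap]; constructor <;> assumption

lemma IsLinkEdge.crosses_insert_b_D (hab : a ≠ b) (haD : a ∉ D) (hbC : b ∉ C)
    (hCD : Disjoint C D) {e : Sym2 V} (he : IsLinkEdge a b C D e) :
    e.crosses (insert b D) = true := by
  cases he with
  | ab => simp [hab, haD]
  | ad hd => simp [hab, haD, hd]
  | bc hc => simp [ne_of_mem_of_not_mem hc hbC, Set.disjoint_left.mp hCD hc]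
  | cd hc hd => simp [ne_of_mem_of_not_mem hc hbC, Set.disjoint_left.mp hCD hc, hd]

lemma IsLinkEdge.crosses_insert_b_C_of_forall_ne_spoke (hab : a ≠ b) (haC : a ∉ C)
    (hbD : b ∉ D) (hCD : Disjoint C D) {g : V → V} (hgC : ∀ c ∈ C, g c = b)
    (hgD : ∀ d ∈ D, g d = a) {e : Sym2 V} (he : IsLinkEdge a b C D e)
    (hne : ∀ u ∈ C ∪ D, e ≠ s(u, g u)) :
    e.crosses (insert b C) = true := by
  cases he with
  | ab => simp [hab, haC]
  | ad hd => exact absurd (by rw [hgD _ hd, Sym2.eq_swap]) (hne _ (Or.inr hd))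
  | bc hc => exact absurd (by rw [hgC _ hc, Sym2.eq_swap]) (hne _ (Or.inl hc))
  | cd hc hd => simp [ne_of_mem_of_not_mem hd hbD, Set.disjoint_right.mp hCD hd, hc]

lemma IsLinkEdge.weight_eq (hab : a ≠ b) (haC : a ∉ C) (hbD : b ∉ D) (hCD : Disjoint C D)
    {Γ : SimpleGraph V} {w : Sym2 V → ℝ} {long short : ℝ}
    (hwab : Γ.Adj a b → w s(a, b) = long)
    (hwcd : ∀ c ∈ C, ∀ d ∈ D, Γ.Adj c d → w s(c, d) = long)
    (hwad : ∀ d ∈ D, Γ.Adj a d → w s(a, d) = short)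
    (hwbc : ∀ c ∈ C, Γ.Adj b c → w s(b, c) = short)
    {e : Sym2 V} (he : IsLinkEdge a b C D e) (hΓ : e ∈ Γ.edgeSet) :
    w e = if e.crosses (insert b C) then long else short := by
  cases he with
  | ab => simp [hab, haC, hwab hΓ]
  | ad hd => simp [hab, haC, ne_of_mem_of_not_mem hd hbD, Set.disjoint_right.mp hCD hd,
      hwad _ hd hΓ]
  | bc hc => simp [hc, hwbc _ hc hΓ]
  | cd hc hd => simp [ne_of_mem_of_not_mem hd hbD, Set.disjoint_right.mp hCD hd, hc,
      hwcd _ hc _ hd hΓ]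

end LinkGraph

lemma two_pi_le_link_weight {θ n L : ℝ} (hθ₁ : Real.pi / 4 ≤ θ)
    (hθ₂ : θ ≤ Real.pi / 2) (hn : 4 ≤ n) (hL : 2 ≤ L) :
    2 * Real.pi ≤ (Real.pi - 2 * θ) * n + (4 * θ - Real.pi) * L :=
  calc 2 * Real.pi = (Real.pi - 2 * θ) * 4 + (4 * θ - Real.pi) * 2 := by ring
    _ ≤ (Real.pi - 2 * θ) * n + (4 * θ - Real.pi) * L := by
      gcongr <;> linarith

/-- The paper's lemma on links of interior cone points: in a graph on
`{a} ∪ {b} ∪ C ∪ D` (pairwise disjoint) whose edges are of the forms `{a,b}`,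
`{a,d}`, `{b,c}` or `{c,d}` (`c ∈ C`, `d ∈ D`), with weights `2θ` on edges
`{a,b}` and `{c,d}` and `π − 2θ` on edges `{a,d}` and `{b,c}`, where
`π/3 ≤ θ ≤ π/2`, every cycle has total weight at least `2π`. -/
theorem link_cycle_weight_ge_two_pi {V : Type*} (a b : V) (hab : a ≠ b)
    (C D : Set V) (haC : a ∉ C) (haD : a ∉ D) (hbC : b ∉ C) (hbD : b ∉ D)
    (hCD : Disjoint C D) (Γ : SimpleGraph V)
    (hadj : ∀ x y, Γ.Adj x y →
      (x = a ∧ y = b) ∨ (x = b ∧ y = a) ∨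
      (x = a ∧ y ∈ D) ∨ (x ∈ D ∧ y = a) ∨
      (x = b ∧ y ∈ C) ∨ (x ∈ C ∧ y = b) ∨
      (x ∈ C ∧ y ∈ D) ∨ (x ∈ D ∧ y ∈ C))
    (θ : ℝ) (hθ₁ : Real.pi / 3 ≤ θ) (hθ₂ : θ ≤ Real.pi / 2)
    (w : Sym2 V → ℝ)
    (hwab : Γ.Adj a b → w s(a, b) = 2 * θ)
    (hwcd : ∀ c ∈ C, ∀ d ∈ D, Γ.Adj c d → w s(c, d) = 2 * θ)
    (hwad : ∀ d ∈ D, Γ.Adj a d → w s(a, d) = Real.pi - 2 * θ)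
    (hwbc : ∀ c ∈ C, Γ.Adj b c → w s(b, c) = Real.pi - 2 * θ)
    {v : V} (p : Γ.Walk v v) (hp : p.IsCycle) :
    (p.edges.map w).sum ≥ 2 * Real.pi := by
  classical
  have hlink : ∀ e ∈ p.edges, IsLinkEdge a b C D e :=
    fun e he => isLinkEdge_of_mem_edgeSet hadj (p.edges_subset_edgeSet he)
  set L := p.edges.countP (Sym2.crosses (insert b C))
  have hn : Even p.length := by
    have hall := List.countP_eq_length.2 fun e he =>
      (hlink e he).crosses_insert_b_D hab haD hbC hCD
    rw [← p.length_edges, ← hall]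
    exact (p.even_countP_crosses_iff _).2 Iff.rfl
  have hL : Even L := (p.even_countP_crosses_iff _).2 Iff.rfl
  have hL0 : L ≠ 0 := by
    obtain ⟨e, he, hne⟩ := hp.exists_mem_edges_forall_ne_spoke (U := C ∪ D)
      (g := fun u => if u ∈ D then a else b) fun u _ => by split_ifs <;> simp [*]
    refine (List.countP_pos_iff.2 ⟨e, he, ?_⟩).ne'
    exact (hlink e he).crosses_insert_b_C_of_forall_ne_spoke hab haC hbD hCD
      (fun c hc => if_neg (Set.disjoint_left.mp hCD hc)) (fun d hd => if_pos hd) hne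
  have hsum : (p.edges.map w).sum =
      (Real.pi - 2 * θ) * p.length + (4 * θ - Real.pi) * L := by
    rw [← p.length_edges, List.sum_map_eq_of_forall_ite _ _ _ (2 * θ) (Real.pi - 2 * θ)
      fun e he => (hlink e he).weight_eq hab haC hbD hCD hwab hwcd hwad hwbc
        (p.edges_subset_edgeSet he)]
    ring
  have hn4 : (4 : ℝ) ≤ p.length := by
    obtain ⟨k, hk⟩ := hn
    exact_mod_cast (by have := hp.three_le_length; omega : 4 ≤ p.length)
  have hL2 : (2 : ℝ) ≤ L := by
    obtain ⟨k, hk⟩ := hL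
    exact_mod_cast (by omega : 2 ≤ L)
  exact hsum ▸ two_pi_le_link_weight (by linarith [Real.pi_pos]) hθ₂ hn4 hL2
end

section
/- Let V be a type and let A, B, C ⊆ V be pairwise disjoint sets with A ∪ B ∪ C = V. Let Γ be a simple graph on V such that every pair of adjacent vertices consists, up to order, of one vertex of A and one vertex of B, or of one vertex of B and one vertex of C. Assume that every vertex of A has degree at most 1 in Γ, and that any two distinct vertices of C have at most one common neighbour. Then every cycle of Γ visits only vertices of B ∪ C and has at least 6 edges. Consequently, if θ is a real number with θ > π/3 and w : Sym2 V → ℝ is a weight function with w(e) ≥ θ for every edge e of Γ joining a vertex of B and a vertex of C, then the sum of w over the edge list of every cycle of Γ is strictly greater than 2π. -/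
/-!
A vertex of `A` has at most one neighbour, so no cycle passes through it, and every cycle
alternates between `B` and `C`. Hence cycles have even length, and a cycle of length `4` would
contain two distinct vertices of `C` with two distinct common neighbours. So every cycle has at
least `6` edges, all of them `B`–`C` edges of weight at least `θ > π/3`.
-/

namespace SimpleGraph.Walk

variable {V : Type*} {G : SimpleGraph V} {u v x y : V}

theorem IsCycle.nontrivial_neighborSet {p : G.Walk u u} (hp : p.IsCycle) (hx : x ∈ p.support) :
    (G.neighborSet x).Nontrivial := by
  classical
  have hq := hp.rotate hx
  exact ⟨_, (p.rotate x hx).adj_snd hq.not_nil,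
    _, ((p.rotate x hx).adj_penultimate hq.not_nil).symm, hq.snd_ne_penultimate⟩

theorem even_length_iff_of_adj_iff_not {P : V → Prop} (p : G.Walk u v)
    (hP : ∀ x ∈ p.support, ∀ y ∈ p.support, G.Adj x y → (P x ↔ ¬ P y)) :
    Even p.length ↔ (P u ↔ P v) := by
  induction p with
  | nil => simp
  | @cons u w v h q ih =>
    have huw := hP u (by simp) w (by simp) h
    have ih := ih fun x hx y hy => hP x (by simp [hx]) y (by simp [hy])
    simp only [length_cons, Nat.even_add_one]
    tauto

theorem IsCycle.length_ne_four {P : V → Prop} {p : G.Walk u u} (hp : p.IsCycle)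
    (hP : ∀ x ∈ p.support, ∀ y ∈ p.support, G.Adj x y → (P x ↔ ¬ P y))
    (hcommon : ∀ x, P x → ∀ y, P y → x ≠ y →
      ∀ a b, G.Adj x a → G.Adj y a → G.Adj x b → G.Adj y b → a = b) :
    p.length ≠ 4 := by
  intro h4
  have hadj : ∀ i < 4, G.Adj (p.getVert i) (p.getVert (i + 1)) := fun i hi =>
    p.adj_getVert_succ (h4 ▸ hi)
  have hflip : ∀ i < 4, (P (p.getVert i) ↔ ¬ P (p.getVert (i + 1))) := fun i hi =>
    hP _ (p.getVert_mem_support i) _ (p.getVert_mem_support (i + 1)) (hadj i hi)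
  have h40 : p.getVert 4 = p.getVert 0 := by rw [← h4, getVert_length, getVert_zero]
  have h02 : p.getVert 0 ≠ p.getVert 2 := hp.getVert_sub_one_ne_getVert_add_one (i := 1) (by omega)
  have h13 : p.getVert 1 ≠ p.getVert 3 := hp.getVert_sub_one_ne_getVert_add_one (i := 2) (by omega)
  have h30 := hadj 3 (by norm_num)
  have h3flip := hflip 3 (by norm_num)
  rw [h40] at h30 h3flip
  by_cases h0 : P (p.getVert 0)
  · have h2 : P (p.getVert 2) := by have := hflip 0; have := hflip 1; tauto
    exact h13 <| hcommon _ h0 _ h2 h02 _ _ (hadj 0 (by norm_num)) (hadj 1 (by norm_num)).symm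
      h30.symm (hadj 2 (by norm_num))
  · have h1 : P (p.getVert 1) := by have := hflip 0; tauto
    have h3 : P (p.getVert 3) := by tauto
    exact h02 <| hcommon _ h1 _ h3 h13 _ _ (hadj 0 (by norm_num)).symm h30
      (hadj 1 (by norm_num)) (hadj 2 (by norm_num)).symm

theorem IsCycle.six_le_length {P : V → Prop} {p : G.Walk u u} (hp : p.IsCycle)
    (hP : ∀ x ∈ p.support, ∀ y ∈ p.support, G.Adj x y → (P x ↔ ¬ P y))
    (hcommon : ∀ x, P x → ∀ y, P y → x ≠ y →
      ∀ a b, G.Adj x a → G.Adj y a → G.Adj x b → G.Adj y b → a = b) :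
    6 ≤ p.length := by
  have h3 := hp.three_le_length
  have h4 := hp.length_ne_four hP hcommon
  obtain ⟨k, hk⟩ := (p.even_length_iff_of_adj_iff_not hP).mpr Iff.rfl
  omega

section TripartiteLink

variable {A B C : Set V} {Γ : SimpleGraph V} {p : Γ.Walk u u}

theorem IsCycle.notMem_of_mem_support
    (hdegA : ∀ x ∈ A, ∀ y z, Γ.Adj x y → Γ.Adj x z → y = z)
    (hp : p.IsCycle) (hx : x ∈ p.support) : x ∉ A := fun hxA =>
  Set.not_nontrivial_iff.mpr (fun y hy z hz => hdegA x hxA y z hy hz)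
    (hp.nontrivial_neighborSet hx)

theorem IsCycle.mem_union_of_mem_support
    (hadj : ∀ x y, Γ.Adj x y →
      (x ∈ A ∧ y ∈ B) ∨ (x ∈ B ∧ y ∈ A) ∨ (x ∈ B ∧ y ∈ C) ∨ (x ∈ C ∧ y ∈ B))
    (hdegA : ∀ x ∈ A, ∀ y z, Γ.Adj x y → Γ.Adj x z → y = z)
    (hp : p.IsCycle) (hx : x ∈ p.support) : x ∈ B ∪ C := by
  obtain ⟨y, hxy⟩ := (hp.nontrivial_neighborSet hx).nonempty
  have hxA := hp.notMem_of_mem_support hdegA hx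
  rcases hadj x y hxy with h | h | h | h <;> simp_all

theorem IsCycle.mem_and_mem_or_of_adj
    (hadj : ∀ x y, Γ.Adj x y →
      (x ∈ A ∧ y ∈ B) ∨ (x ∈ B ∧ y ∈ A) ∨ (x ∈ B ∧ y ∈ C) ∨ (x ∈ C ∧ y ∈ B))
    (hdegA : ∀ x ∈ A, ∀ y z, Γ.Adj x y → Γ.Adj x z → y = z)
    (hp : p.IsCycle) (hx : x ∈ p.support) (hy : y ∈ p.support) (hxy : Γ.Adj x y) :
    (x ∈ B ∧ y ∈ C) ∨ (x ∈ C ∧ y ∈ B) := by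
  have hxA := hp.notMem_of_mem_support hdegA hx
  have hyA := hp.notMem_of_mem_support hdegA hy
  rcases hadj x y hxy with h | h | h | h <;> simp_all

theorem IsCycle.le_of_mem_edges
    (hadj : ∀ x y, Γ.Adj x y →
      (x ∈ A ∧ y ∈ B) ∨ (x ∈ B ∧ y ∈ A) ∨ (x ∈ B ∧ y ∈ C) ∨ (x ∈ C ∧ y ∈ B))
    (hdegA : ∀ x ∈ A, ∀ y z, Γ.Adj x y → Γ.Adj x z → y = z)
    {θ : ℝ} {w : Sym2 V → ℝ} (hw : ∀ x y, Γ.Adj x y → x ∈ B → y ∈ C → θ ≤ w s(x, y))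
    (hp : p.IsCycle) {e : Sym2 V} (he : e ∈ p.edges) : θ ≤ w e := by
  induction e using Sym2.ind with
  | _ x y =>
    have hxy := p.adj_of_mem_edges he
    rcases hp.mem_and_mem_or_of_adj hadj hdegA (p.fst_mem_support_of_mem_edges he)
      (p.snd_mem_support_of_mem_edges he) hxy with ⟨hxB, hyC⟩ | ⟨hxC, hyB⟩
    · exact hw x y hxy hxB hyC
    · exact Sym2.eq_swap ▸ hw y x hxy.symm hyB hxC

end TripartiteLink

end SimpleGraph.Walk

theorem tripartite_link_cycle_bound_general {V : Type*} (A B C : Set V)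
    (hBC : Disjoint B C) (Γ : SimpleGraph V)
    (hadj : ∀ x y, Γ.Adj x y →
      (x ∈ A ∧ y ∈ B) ∨ (x ∈ B ∧ y ∈ A) ∨ (x ∈ B ∧ y ∈ C) ∨ (x ∈ C ∧ y ∈ B))
    (hdegA : ∀ x ∈ A, ∀ y z, Γ.Adj x y → Γ.Adj x z → y = z)
    (hcommon : ∀ c ∈ C, ∀ c' ∈ C, c ≠ c' →
      ∀ y z, Γ.Adj c y → Γ.Adj c' y → Γ.Adj c z → Γ.Adj c' z → y = z) :
    (∀ (v : V) (p : Γ.Walk v v), p.IsCycle →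
        (∀ x ∈ p.support, x ∈ B ∪ C) ∧ 6 ≤ p.edges.length) ∧
    (∀ θ : ℝ, Real.pi / 3 < θ →
      ∀ w : Sym2 V → ℝ,
        (∀ x y, Γ.Adj x y → x ∈ B → y ∈ C → θ ≤ w s(x, y)) →
        ∀ (v : V) (p : Γ.Walk v v), p.IsCycle →
          2 * Real.pi < (p.edges.map w).sum) := by
  have hsix : ∀ (v : V) (p : Γ.Walk v v), p.IsCycle → 6 ≤ p.length := fun v p hp =>
    hp.six_le_length (P := (· ∈ C)) (fun x hx y hy hxy => by
      rcases hp.mem_and_mem_or_of_adj hadj hdegA hx hy hxy with ⟨hxB, hyC⟩ | ⟨hxC, hyB⟩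
      · simp [hyC, hBC.notMem_of_mem_left hxB]
      · simp [hxC, hBC.notMem_of_mem_left hyB]) hcommon
  refine ⟨fun v p hp => ⟨fun x hx => hp.mem_union_of_mem_support hadj hdegA hx,
    p.length_edges ▸ hsix v p hp⟩, fun θ hθ w hw v p hp => ?_⟩
  have hθ0 : 0 < θ := lt_trans (by positivity) hθ
  have hwθ : ∀ e ∈ p.edges, θ ≤ w e := fun e he => hp.le_of_mem_edges hadj hdegA hw he
  calc 2 * Real.pi = 6 * (Real.pi / 3) := by ring
    _ < 6 * θ := by linarith
    _ ≤ p.length * θ := by gcongr; exact_mod_cast hsix v p hp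
    _ ≤ (p.edges.map w).sum := by
      simpa [nsmul_eq_mul] using List.card_nsmul_le_sum (p.edges.map w) θ (by simpa using hwθ)

/-- The paper's lemma on links of Bass–Serre vertices: in a tripartite graph on
`A ∪ B ∪ C` whose edges join `A` to `B` or `B` to `C`, where vertices of `A`
have degree at most one and two distinct vertices of `C` have at most one
common neighbour, every cycle stays in `B ∪ C` and has at least `6` edges;
consequently, for `θ > π/3` and any weight function which is at least `θ` on
every `B`–`C` edge, every cycle has total weight strictly greater than `2π`. -/
theorem tripartite_link_cycle_bound {V : Type*} (A B C : Set V)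
    (hAB : Disjoint A B) (hAC : Disjoint A C) (hBC : Disjoint B C)
    (hcover : A ∪ B ∪ C = Set.univ) (Γ : SimpleGraph V)
    (hadj : ∀ x y, Γ.Adj x y →
      (x ∈ A ∧ y ∈ B) ∨ (x ∈ B ∧ y ∈ A) ∨ (x ∈ B ∧ y ∈ C) ∨ (x ∈ C ∧ y ∈ B))
    (hdegA : ∀ x ∈ A, ∀ y z, Γ.Adj x y → Γ.Adj x z → y = z)
    (hcommon : ∀ c ∈ C, ∀ c' ∈ C, c ≠ c' →
      ∀ y z, Γ.Adj c y → Γ.Adj c' y → Γ.Adj c z → Γ.Adj c' z → y = z) :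
    (∀ (v : V) (p : Γ.Walk v v), p.IsCycle →
        (∀ x ∈ p.support, x ∈ B ∪ C) ∧ 6 ≤ p.edges.length) ∧
    (∀ θ : ℝ, Real.pi / 3 < θ →
      ∀ w : Sym2 V → ℝ,
        (∀ x y, Γ.Adj x y → x ∈ B → y ∈ C → θ ≤ w s(x, y)) →
        ∀ (v : V) (p : Γ.Walk v v), p.IsCycle →
          2 * Real.pi < (p.edges.map w).sum) :=
  tripartite_link_cycle_bound_general A B C hBC Γ hadj hdegA hcommon
end
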